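/- Let (W,S) be a finite Coxeter system of rank m. The extensions of rank at least m−r form a basis of the order-r Coxeter code: C_W(r) = span{E_w : w ∈ W, d(w) ≤ r}, and hence dim C_W(r) = Σ_{i=0}^r ⟨W,i⟩, where ⟨W,i⟩ is the number of elements of W with descent number i. -/

import Mathlib

open Pointwise

/-- The order-`r` Coxeter code of type `(W,S)`: the `F₂`-span of the indicator
functions of standard cosets `σ⟨J⟩` of rank `m - r` (`m` the rank of the system). -/
noncomputable def coxeterCode {B W : Type*} [Fintype B] [Group W] [Fintype W]
    {M : CoxeterMatrix B} (cs : CoxeterSystem M W) (r : ℤ) :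
    Submodule (ZMod 2) (W → ZMod 2) :=
  Submodule.span (ZMod 2)
    {f | ∃ (σ : W) (J : Finset B), (J.card : ℤ) = (Fintype.card B : ℤ) - r ∧
      f = Set.indicator (σ • (Subgroup.closure (cs.simple '' ↑J) : Set W)) (fun _ => 1)}

/-- The extension `E_w` of `w`: the indicator of the coset `w⟨S∖D(w)⟩`. -/
noncomputable def coxeterExtension {B W : Type*} [Group W]
    {M : CoxeterMatrix B} (cs : CoxeterSystem M W) (w : W) : W → ZMod 2 :=
  Set.indicator (w • (Subgroup.closure (cs.simple '' {i : B | ¬ cs.IsRightDescent w i}) : Set W))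
    (fun _ => 1)

/-- The (right) descent number `d(w) = |D(w)|`. -/
noncomputable def descentNumber {B W : Type*} [Group W]
    {M : CoxeterMatrix B} (cs : CoxeterSystem M W) (w : W) : ℕ :=
  Set.ncard {i : B | cs.IsRightDescent w i}

/-- The `W`-Eulerian number `⟨W,i⟩`: the number of elements of `W` with descent
number equal to `i`. -/
noncomputable def eulerianNumber {B W : Type*} [Group W]
    {M : CoxeterMatrix B} (cs : CoxeterSystem M W) (i : ℕ) : ℕ :=
  Set.ncard {w : W | descentNumber cs w = i}

/-!
Counting modulo 2 the occurrences of each reflection in the left inversion sequence of a word is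
the first component of a homomorphism `W → (ℤ/2)^W ⋊ W` evaluated at the product of the word, so
it depends only on that product. For a left descent `sᵢ` of `π ω` the count of `sᵢ` is odd; this
gives the exchange property for arbitrary words. From it, an element `w` without right descents in
`K` is the unique shortest element of `w⟨K⟩`, with `ℓ(w u) = ℓ(w) + ℓ_K(u)` for `u ∈ ⟨K⟩`, where
`ℓ_K` is the length in the letters `K`.

Hence `E_v(w) ≠ 0` forces `v = w` or `ℓ(v) < ℓ(w)`: the extensions are unitriangular, so linearly
independent. A coset of `⟨K⟩` is partitioned by the cosets `y⟨J⟩`, `J ⊆ K`, with `y` running over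
its elements without right descents in `J`. Taking `K = S ∖ D(w)` and `|J| = m - r` puts `E_w` into
`C_W(r)`; conversely `1_{u⟨J⟩} = E_u - ∑ 1_{y⟨J⟩}` with every `y` longer than `u`, so the generators
of `C_W(r)` lie in the span of the extensions by downward induction on length. The dimension is
then the number of `w` with `d(w) ≤ r`.
-/

def precompConj {W : Type*} [Group W] : W →* MulAut (W → Multiplicative (ZMod 2)) where
  toFun g := MulEquiv.arrowCongr (MulAut.conj g).toEquiv (MulEquiv.refl _)
  map_one' := by ext f t; show f (1⁻¹ * t * 1) = f t; simp
  map_mul' g h := by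
    ext f t; show f ((g * h)⁻¹ * t * (g * h)) = f (h⁻¹ * (g⁻¹ * t * g) * h); group

@[simp]
theorem precompConj_apply {W : Type*} [Group W] (g : W) (f : W → Multiplicative (ZMod 2))
    (t : W) : precompConj g f t = f (g⁻¹ * t * g) :=
  rfl

theorem linearIndependent_of_triangular {ι α R : Type*} [Ring R] [NoZeroDivisors R]
    {f : ι → α → R} (p : ι → α) (μ : ι → ℕ) (hdiag : ∀ i, f i (p i) ≠ 0)
    (htri : ∀ i j, j ≠ i → f j (p i) ≠ 0 → μ j < μ i) : LinearIndependent R f := by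
  classical
  refine linearIndependent_iff'.mpr fun s g hg ↦ ?_
  by_contra! hne
  obtain ⟨i, hi, hmin⟩ := (s.filter (g · ≠ 0)).exists_min_image μ
    (by simpa [Finset.filter_nonempty_iff] using hne)
  rw [Finset.mem_filter] at hi
  have hgi := congrFun hg (p i)
  rw [Finset.sum_apply, Finset.sum_eq_single_of_mem i hi.1 fun j hj hji ↦ ?_] at hgi
  · exact mul_ne_zero hi.2 (hdiag i) hgi
  · by_contra hne
    have := hmin j (Finset.mem_filter.mpr ⟨hj, left_ne_zero_of_mul hne⟩)
    have := htri i j hji (right_ne_zero_of_mul hne)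
    omega

namespace CoxeterSystem

variable {B W : Type*} [Group W] {M : CoxeterMatrix B} (cs : CoxeterSystem M W)

local prefix:100 "s " => cs.simple
local prefix:100 "π " => cs.wordProd
local prefix:100 "ℓ " => cs.length
local prefix:100 "lis " => cs.leftInvSeq

section ReflectionCocycle

open scoped Classical

theorem count_leftInvSeq_cons (i : B) (ω : List B) (t : W) :
    (lis (i :: ω)).count t = (lis ω).count (s i * t * s i) + if s i = t then 1 else 0 := by
  obtain ⟨u, rfl⟩ : ∃ u, t = MulAut.conj (s i) u := ⟨s i * t * s i, by simp [mul_assoc]⟩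
  rw [leftInvSeq, List.count_cons, List.count_map_of_injective _ _ (MulAut.conj (s i)).injective,
    show s i * MulAut.conj (s i) u * s i = u by simp [mul_assoc]]
  simp only [beq_iff_eq]

noncomputable def leftInvSeqParity (ω : List B) : W → Multiplicative (ZMod 2) :=
  fun t ↦ .ofAdd ((lis ω).count t : ZMod 2)

noncomputable def reflectionCocycleGen (i : B) : (W → Multiplicative (ZMod 2)) ⋊[precompConj] W :=
  ⟨Pi.mulSingle (s i) (.ofAdd 1), s i⟩

theorem prod_map_reflectionCocycleGen (ω : List B) :
    (ω.map cs.reflectionCocycleGen).prod = ⟨cs.leftInvSeqParity ω, π ω⟩ := by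
  induction ω with
  | nil => rfl
  | cons i ω ih =>
    rw [List.map_cons, List.prod_cons, ih]
    ext t
    · simp only [SemidirectProduct.mul_left, reflectionCocycleGen, Pi.mul_apply,
        precompConj_apply, leftInvSeqParity, count_leftInvSeq_cons, Pi.mulSingle_apply,
        inv_simple]
      rw [eq_comm (a := t)]
      split_ifs <;> simp [add_comm]
    · simp [reflectionCocycleGen, wordProd_cons]

theorem prod_map_alternatingWord {G : Type*} [Monoid G] (f : B → G) (i j : B) (p : ℕ) :
    ((alternatingWord i j (2 * p)).map f).prod = (f i * f j) ^ p := by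
  induction p with
  | zero => simp [alternatingWord]
  | succ p ih =>
    rw [Nat.mul_succ, alternatingWord_succ', alternatingWord_succ', if_neg (by simp),
      if_pos (by simp), List.map_cons, List.map_cons, List.prod_cons, List.prod_cons, ih,
      ← mul_assoc, pow_succ']

theorem leftInvSeq_alternatingWord (i j : B) (p : ℕ) :
    lis (alternatingWord i j (2 * p)) =
      (List.range (2 * p)).map fun k ↦ s i * (s j * s i) ^ k := by
  refine List.ext_getElem (by simp) fun k hk _ ↦ ?_
  rw [getElem_leftInvSeq_alternatingWord cs i j p k (by simpa using hk),
    prod_alternatingWord_eq_mul_pow]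
  simp [Nat.not_even_bit1, show (2 * k + 1) / 2 = k by omega]

theorem even_count_leftInvSeq_braidWord (i j : B) (t : W) :
    Even ((lis (alternatingWord i j (2 * M i j))).count t) := by
  have hper : (fun k ↦ s i * (s j * s i) ^ k) ∘ (M i j + ·) = fun k ↦ s i * (s j * s i) ^ k := by
    funext k
    simp [pow_add]
  rw [leftInvSeq_alternatingWord, two_mul, List.range_add, List.map_append, List.map_map, hper,
    List.count_append]
  exact Even.add_self _

theorem isLiftable_reflectionCocycleGen : M.IsLiftable cs.reflectionCocycleGen := by
  intro i j
  rw [← prod_map_alternatingWord, prod_map_reflectionCocycleGen]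
  ext t
  · simp [leftInvSeqParity, (even_count_leftInvSeq_braidWord cs i j t).natCast_zmod_two]
  · simp [prod_alternatingWord_eq_mul_pow]

noncomputable def reflectionCocycle : W →* (W → Multiplicative (ZMod 2)) ⋊[precompConj] W :=
  cs.lift ⟨cs.reflectionCocycleGen, cs.isLiftable_reflectionCocycleGen⟩

theorem reflectionCocycle_wordProd (ω : List B) :
    cs.reflectionCocycle (π ω) = ⟨cs.leftInvSeqParity ω, π ω⟩ := by
  rw [← prod_map_reflectionCocycleGen, wordProd, map_list_prod, List.map_map]
  congr 1
  exact List.map_congr_left fun i _ ↦ cs.lift_apply_simple _ i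

theorem count_leftInvSeq_eq_of_wordProd_eq {ω ω' : List B} (h : π ω = π ω') (t : W) :
    ((lis ω).count t : ZMod 2) = (lis ω').count t := by
  have := congrArg (fun x ↦ Multiplicative.toAdd (x.left t)) (congrArg cs.reflectionCocycle h)
  simpa [reflectionCocycle_wordProd, leftInvSeqParity] using this

end ReflectionCocycle

-- `sᵢ` occurs once in `lis (i :: τ)` for a reduced word `τ` of `sᵢ π ω`, so an odd number of times
-- in `lis ω`.
theorem simple_mem_leftInvSeq_of_isLeftDescent {ω : List B} {i : B}
    (hi : cs.IsLeftDescent (π ω) i) : s i ∈ lis ω := by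
  classical
  obtain ⟨τ, hτ, hτω⟩ := cs.exists_isReduced (s i * π ω)
  have hnot : s i ∉ lis τ := fun hmem ↦ by
    have := (cs.isLeftInversion_of_mem_leftInvSeq hτ hmem).2
    rw [← hτω, simple_mul_simple_cancel_left] at this
    exact lt_asymm hi this
  have hcount := cs.count_leftInvSeq_eq_of_wordProd_eq (ω := ω) (ω' := i :: τ)
    (by rw [wordProd_cons, ← hτω, simple_mul_simple_cancel_left]) (s i)
  rw [count_leftInvSeq_cons, simple_mul_simple_self, one_mul,
    List.count_eq_zero.mpr hnot] at hcount
  refine List.count_pos_iff.mp (Nat.pos_of_ne_zero fun h ↦ ?_)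
  simp [h] at hcount

theorem exists_wordProd_mul_simple_eq_eraseIdx {ω : List B} {i : B}
    (hi : cs.IsRightDescent (π ω) i) : ∃ j < ω.length, π ω * s i = π (ω.eraseIdx j) := by
  have hmem := cs.simple_mem_leftInvSeq_of_isLeftDescent (ω := ω.reverse)
    (by rwa [wordProd_reverse, isLeftDescent_inv_iff])
  rw [leftInvSeq_reverse, List.mem_reverse] at hmem
  obtain ⟨j, hj, hget⟩ := List.mem_iff_getElem.mp hmem
  rw [length_rightInvSeq] at hj
  refine ⟨j, hj, ?_⟩
  rw [← wordProd_mul_getD_rightInvSeq, List.getD_eq_getElem _ _ (by simpa using hj), hget]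

section Parabolic

variable {K : Set B}

theorem mem_closure_simple_image_iff {u : W} :
    u ∈ Subgroup.closure (cs.simple '' K) ↔ ∃ ω : List B, (∀ i ∈ ω, i ∈ K) ∧ π ω = u := by
  constructor
  · intro hu
    induction hu using Subgroup.closure_induction_left with
    | one => exact ⟨[], by simp, rfl⟩
    | mul_left _ hx _ _ ih | inv_mul_cancel _ hx _ _ ih =>
      obtain ⟨i, hi, rfl⟩ := hx
      obtain ⟨ω, hωK, rfl⟩ := ih
      exact ⟨i :: ω, by simpa [hi] using hωK, by simp [wordProd_cons]⟩
  · rintro ⟨ω, hωK, rfl⟩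
    refine (Subgroup.closure _).list_prod_mem fun u hu ↦ ?_
    obtain ⟨i, hi, rfl⟩ := List.mem_map.mp hu
    exact Subgroup.subset_closure ⟨i, hωK i hi, rfl⟩

def IsReducedIn (K : Set B) (ω : List B) : Prop :=
  (∀ i ∈ ω, i ∈ K) ∧ ∀ ω' : List B, (∀ i ∈ ω', i ∈ K) → π ω' = π ω → ω.length ≤ ω'.length

theorem exists_isReducedIn {u : W} (hu : u ∈ Subgroup.closure (cs.simple '' K)) :
    ∃ ω, cs.IsReducedIn K ω ∧ π ω = u := by
  classical
  have hex : ∃ n, ∃ ω : List B, (∀ i ∈ ω, i ∈ K) ∧ π ω = u ∧ ω.length = n := by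
    obtain ⟨ω, hωK, hω⟩ := (cs.mem_closure_simple_image_iff).mp hu
    exact ⟨_, ω, hωK, hω, rfl⟩
  obtain ⟨ω, hωK, hω, hlen⟩ := Nat.find_spec hex
  refine ⟨ω, ⟨hωK, fun ω' hω'K hω' ↦ ?_⟩, hω⟩
  rw [hlen]
  exact Nat.find_min' hex ⟨ω', hω'K, hω'.trans hω, rfl⟩

theorem IsReducedIn.of_append_singleton {ω : List B} {i : B}
    (h : cs.IsReducedIn K (ω ++ [i])) : cs.IsReducedIn K ω := by
  refine ⟨fun j hj ↦ h.1 j (List.mem_append_left _ hj), fun ω' hω'K hω' ↦ ?_⟩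
  have := h.2 (ω' ++ [i]) (by simpa [or_imp, forall_and] using ⟨hω'K, h.1 i (by simp)⟩)
    (by simp [wordProd_append, hω'])
  simpa using this

-- The letter deleted by the exchange property either shortens `w` within `w⟨K⟩` or shortens the
-- `K`-word `ω`; both are excluded.
theorem length_mul_wordProd_of_isReducedIn {w : W}
    (hw : ∀ u ∈ Subgroup.closure (cs.simple '' K), ℓ w ≤ ℓ (w * u)) {ω : List B}
    (hω : cs.IsReducedIn K ω) : ℓ (w * π ω) = ℓ w + ω.length := by
  induction ω using List.reverseRecOn with
  | nil => simp
  | append_singleton ω i ih =>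
    have ih := ih hω.of_append_singleton
    rw [wordProd_append, wordProd_singleton, ← mul_assoc, List.length_append,
      List.length_singleton, ← add_assoc, ← ih]
    refine (cs.length_mul_simple (w * π ω) i).resolve_right fun hdesc ↦ ?_
    obtain ⟨ρ, hρ, rfl⟩ := cs.exists_isReduced w
    obtain ⟨j, hj, hexch⟩ := cs.exists_wordProd_mul_simple_eq_eraseIdx (ω := ρ ++ ω) (i := i)
      (by rw [IsRightDescent, wordProd_append]; omega)
    rw [wordProd_append] at hexch
    rw [List.length_append] at hj
    rcases lt_or_ge j ρ.length with hjρ | hjρ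
    · rw [List.eraseIdx_append_of_lt_length hjρ, wordProd_append] at hexch
      have hmem : π ω * s i * (π ω)⁻¹ ∈ Subgroup.closure (cs.simple '' K) := by
        refine mul_mem (mul_mem ?_ (Subgroup.subset_closure ⟨i, hω.1 i (by simp), rfl⟩))
          (inv_mem ?_) <;>
        exact (cs.mem_closure_simple_image_iff).mpr ⟨ω, hω.of_append_singleton.1, rfl⟩
      have hmin := hw _ hmem
      rw [show π ρ * (π ω * s i * (π ω)⁻¹) = π (ρ.eraseIdx j) by
        simp only [← mul_assoc]; rw [hexch, mul_inv_cancel_right]] at hmin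
      have hle := cs.length_wordProd_le (ρ.eraseIdx j)
      rw [List.length_eraseIdx_of_lt hjρ] at hle
      have := hρ.eq
      omega
    · rw [List.eraseIdx_append_of_length_le hjρ, wordProd_append, mul_assoc,
        mul_right_inj] at hexch
      have := hω.2 (ω.eraseIdx (j - ρ.length))
        (fun k hk ↦ hω.1 k (List.mem_append_left _ (List.mem_of_mem_eraseIdx hk)))
        (by rw [← hexch, wordProd_append, wordProd_singleton])
      rw [List.length_eraseIdx_of_lt (by omega), List.length_append,
        List.length_singleton] at this
      omega

theorem exists_length_le_length_mul (x : W) (K : Set B) :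
    ∃ v, x⁻¹ * v ∈ Subgroup.closure (cs.simple '' K) ∧
      ∀ u ∈ Subgroup.closure (cs.simple '' K), ℓ v ≤ ℓ (v * u) := by
  let C := {v | x⁻¹ * v ∈ Subgroup.closure (cs.simple '' K)}
  have hC : C.Nonempty := ⟨x, by simp [C, one_mem]⟩
  have hmem : Function.argminOn cs.length C hC ∈ C := Function.argminOn_mem _ _ _
  refine ⟨_, hmem, fun u hu ↦ Function.argminOn_le _ _ ?_⟩
  simpa [C, ← mul_assoc] using mul_mem hmem hu

theorem exists_not_isRightDescent_mem_leftCoset (x : W) (K : Set B) :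
    ∃ v, x⁻¹ * v ∈ Subgroup.closure (cs.simple '' K) ∧ ∀ i ∈ K, ¬ cs.IsRightDescent v i := by
  obtain ⟨v, hxv, hv⟩ := cs.exists_length_le_length_mul x K
  exact ⟨v, hxv, fun i hi ↦ not_lt.mpr (hv _ (Subgroup.subset_closure ⟨i, hi, rfl⟩))⟩

-- `w = v π ω` with `v` shortest in `w⟨K⟩`; a last letter of `ω` would be a right descent of `w`.
theorem length_le_length_mul_of_not_isRightDescent {w : W}
    (hw : ∀ i ∈ K, ¬ cs.IsRightDescent w i) {u : W}
    (hu : u ∈ Subgroup.closure (cs.simple '' K)) : ℓ w ≤ ℓ (w * u) := by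
  obtain ⟨v, hvw, hv⟩ := cs.exists_length_le_length_mul w K
  obtain ⟨ω, hω, hωv⟩ := cs.exists_isReducedIn (inv_mem hvw)
  have hvω : v * π ω = w := by rw [hωv]; group
  rcases ω.eq_nil_or_concat with rfl | ⟨ω, i, rfl⟩
  · rw [wordProd_nil, mul_one] at hvω
    exact hvω ▸ hv u hu
  · rw [List.concat_eq_append] at hω hvω
    refine absurd ?_ (hw i (hω.1 i (by simp)))
    have hlen := cs.length_mul_wordProd_of_isReducedIn hv hω
    rw [wordProd_append, wordProd_singleton] at hlen
    rw [IsRightDescent, ← hvω, wordProd_append, wordProd_singleton, mul_assoc,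
      simple_mul_simple_cancel_right,
      cs.length_mul_wordProd_of_isReducedIn hv hω.of_append_singleton, hlen,
      List.length_append, List.length_singleton]
    omega

theorem length_lt_length_mul_of_not_isRightDescent {w : W}
    (hw : ∀ i ∈ K, ¬ cs.IsRightDescent w i) {u : W}
    (hu : u ∈ Subgroup.closure (cs.simple '' K)) (hu₁ : u ≠ 1) : ℓ w < ℓ (w * u) := by
  obtain ⟨ω, hω, rfl⟩ := cs.exists_isReducedIn hu
  rw [cs.length_mul_wordProd_of_isReducedIn
    (fun u hu ↦ cs.length_le_length_mul_of_not_isRightDescent hw hu) hω]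
  have : ω ≠ [] := by rintro rfl; exact hu₁ rfl
  simpa [List.length_pos_iff] using this

theorem eq_of_not_isRightDescent_of_mem_leftCoset {v w : W}
    (hv : ∀ i ∈ K, ¬ cs.IsRightDescent v i) (hw : ∀ i ∈ K, ¬ cs.IsRightDescent w i)
    (hvw : v⁻¹ * w ∈ Subgroup.closure (cs.simple '' K)) : v = w := by
  by_contra hne
  have h₁ := cs.length_lt_length_mul_of_not_isRightDescent hv hvw
    (by rwa [Ne, inv_mul_eq_one])
  have h₂ := cs.length_lt_length_mul_of_not_isRightDescent hw (inv_mem hvw)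
    (by rwa [Ne, inv_eq_one, inv_mul_eq_one])
  simp only [mul_inv_cancel_left, mul_inv_rev, inv_inv] at h₁ h₂
  omega

open scoped Classical in
theorem indicator_leftCoset_eq_sum [Fintype W] {R : Type*} [AddCommMonoid R] (c : R)
    {J : Set B} (hJK : J ⊆ K) (x : W) :
    Set.indicator (x • (Subgroup.closure (cs.simple '' K) : Set W)) (fun _ ↦ c) =
      ∑ y ∈ Finset.univ.filter (fun y ↦ x⁻¹ * y ∈ Subgroup.closure (cs.simple '' K) ∧
          ∀ i ∈ J, ¬ cs.IsRightDescent y i),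
        Set.indicator (y • (Subgroup.closure (cs.simple '' J) : Set W)) (fun _ ↦ c) := by
  have hle : Subgroup.closure (cs.simple '' J) ≤ Subgroup.closure (cs.simple '' K) :=
    Subgroup.closure_mono (Set.image_mono hJK)
  ext v
  rw [Finset.sum_apply, Set.indicator_apply, mem_leftCoset_iff]
  split_ifs with hxv
  · obtain ⟨y₀, hvy₀, hy₀⟩ := cs.exists_not_isRightDescent_mem_leftCoset v J
    have hy₀mem : y₀ ∈ Finset.univ.filter (fun y ↦ x⁻¹ * y ∈ Subgroup.closure (cs.simple '' K) ∧
        ∀ i ∈ J, ¬ cs.IsRightDescent y i) :=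
      Finset.mem_filter.mpr
        ⟨Finset.mem_univ _, by simpa [mul_assoc] using mul_mem hxv (hle hvy₀), hy₀⟩
    rw [Finset.sum_eq_single_of_mem y₀ hy₀mem fun y hy hne ↦ ?_]
    · rw [Set.indicator_of_mem (by simpa [mem_leftCoset_iff] using inv_mem hvy₀)]
    · refine Set.indicator_of_notMem (fun hvy ↦ hne ?_) _
      rw [mem_leftCoset_iff] at hvy
      refine cs.eq_of_not_isRightDescent_of_mem_leftCoset (Finset.mem_filter.mp hy).2.2 hy₀ ?_
      simpa [mul_assoc] using mul_mem hvy hvy₀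
  · refine (Finset.sum_eq_zero fun y hy ↦ Set.indicator_of_notMem (fun hvy ↦ hxv ?_) _).symm
    rw [mem_leftCoset_iff] at hvy
    simpa [mul_assoc] using mul_mem (Finset.mem_filter.mp hy).2.1 (hle hvy)

end Parabolic

end CoxeterSystem

section CoxeterCode

variable {B W : Type*} [Group W] {M : CoxeterMatrix B} (cs : CoxeterSystem M W)

theorem coxeterExtension_self (w : W) : coxeterExtension cs w w = 1 :=
  Set.indicator_of_mem (by simp [mem_leftCoset_iff, one_mem]) _

theorem length_lt_of_coxeterExtension_ne_zero {v w : W} (hne : v ≠ w)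
    (h : coxeterExtension cs v w ≠ 0) : cs.length v < cs.length w := by
  have hmem : v⁻¹ * w ∈ Subgroup.closure (cs.simple '' {i | ¬ cs.IsRightDescent v i}) := by
    by_contra hw
    exact h (Set.indicator_of_notMem (by rwa [mem_leftCoset_iff]) _)
  simpa using cs.length_lt_length_mul_of_not_isRightDescent (fun _ hi ↦ hi) hmem
    (by rwa [Ne, inv_mul_eq_one])

theorem linearIndependent_coxeterExtension :
    LinearIndependent (ZMod 2) (coxeterExtension cs) :=
  linearIndependent_of_triangular id cs.length (by simp [coxeterExtension_self])
    fun _ _ hne h ↦ length_lt_of_coxeterExtension_ne_zero cs hne h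

variable [Fintype B]

open scoped Classical in
theorem descentNumber_add_card_not_isRightDescent (w : W) :
    descentNumber cs w + (Finset.univ.filter (¬ cs.IsRightDescent w ·)).card =
      Fintype.card B := by
  rw [descentNumber, ← Finset.coe_filter_univ, Set.ncard_coe_finset,
    Finset.card_filter_add_card_filter_not, Finset.card_univ]

theorem descentNumber_add_card_le {w : W} {J : Finset B}
    (hJ : ∀ i ∈ (J : Set B), ¬ cs.IsRightDescent w i) :
    descentNumber cs w + J.card ≤ Fintype.card B := by
  classical
  rw [← descentNumber_add_card_not_isRightDescent cs w]
  exact Nat.add_le_add_left (Finset.card_le_card fun i hi ↦ by simpa using hJ i hi) _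

variable [Fintype W]

theorem coxeterExtension_mem_coxeterCode {r : ℤ} (hr : r ≤ Fintype.card B) {w : W}
    (hw : (descentNumber cs w : ℤ) ≤ r) : coxeterExtension cs w ∈ coxeterCode cs r := by
  classical
  have hcard := descentNumber_add_card_not_isRightDescent cs w
  obtain ⟨J, hJ, hJcard⟩ := Finset.exists_subset_card_eq (n := (Fintype.card B - r).toNat)
    (s := Finset.univ.filter (¬ cs.IsRightDescent w ·)) (by omega)
  rw [coxeterExtension, cs.indicator_leftCoset_eq_sum 1 (J := J) (fun i hi ↦ by simpa using hJ hi)]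
  exact Submodule.sum_mem _ fun y _ ↦ Submodule.subset_span ⟨y, J, by omega, rfl⟩

open scoped Classical in
-- Downward induction on `ℓ u`: the other cosets of `⟨J⟩` inside `E_u` have longer representatives.
theorem indicator_leftCoset_mem_span_coxeterExtension {r : ℤ} {J : Finset B}
    (hJ : (J.card : ℤ) = Fintype.card B - r) (u : W)
    (hu : ∀ i ∈ (J : Set B), ¬ cs.IsRightDescent u i) :
    Set.indicator (u • (Subgroup.closure (cs.simple '' J) : Set W)) (fun _ ↦ 1) ∈
      Submodule.span (ZMod 2)
        {f | ∃ w : W, (descentNumber cs w : ℤ) ≤ r ∧ f = coxeterExtension cs w} := by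
  have hsum := cs.indicator_leftCoset_eq_sum (1 : ZMod 2) (K := {i | ¬ cs.IsRightDescent u i}) hu u
  rw [← Finset.add_sum_erase _ _ (a := u) (by simpa [one_mem] using hu)] at hsum
  rw [eq_sub_of_add_eq hsum.symm]
  refine sub_mem (Submodule.subset_span ⟨u, ?_, rfl⟩) (Submodule.sum_mem _ fun y hy ↦ ?_)
  · have := descentNumber_add_card_le cs hu
    omega
  simp only [Finset.mem_erase, Finset.mem_filter, Finset.mem_univ, true_and] at hy
  obtain ⟨hyu, huy, hy⟩ := hy
  have : cs.length u < cs.length y := by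
    simpa using cs.length_lt_length_mul_of_not_isRightDescent (fun _ hi ↦ hi) huy
      (by rwa [Ne, inv_mul_eq_one, eq_comm])
  exact indicator_leftCoset_mem_span_coxeterExtension hJ y hy
termination_by (Finset.univ.filter fun v ↦ cs.length u < cs.length v).card
decreasing_by
  refine Finset.card_lt_card ⟨fun v hv ↦ ?_, fun h ↦ ?_⟩
  · simp only [Finset.mem_filter, Finset.mem_univ, true_and] at hv ⊢
    omega
  · have := h (Finset.mem_filter.mpr ⟨Finset.mem_univ y, this⟩)
    simp at this

theorem card_descentNumber_le (r : ℤ) :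
    Fintype.card {w : W // (descentNumber cs w : ℤ) ≤ r} =
      ∑ i ∈ Finset.range (Fintype.card B + 1),
        if (i : ℤ) ≤ r then eulerianNumber cs i else 0 := by
  classical
  rw [Fintype.card_subtype, Finset.card_eq_sum_card_fiberwise (f := descentNumber cs)
    (t := Finset.range (Fintype.card B + 1)) fun w _ ↦ ?_]
  · refine Finset.sum_congr rfl fun i _ ↦ ?_
    rw [Finset.filter_filter, eulerianNumber, Set.ncard_eq_toFinset_card', Set.toFinset_ofPred]
    split_ifs with hi
    · congr 1
      ext w
      simp only [Finset.mem_filter, Finset.mem_univ, true_and, and_iff_right_iff_imp]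
      omega
    · simp only [Finset.card_eq_zero, Finset.filter_eq_empty_iff]
      omega
  · have := descentNumber_add_card_not_isRightDescent cs w
    simp only [Finset.coe_range, Set.mem_Iio]
    omega

end CoxeterCode

theorem coxeterCode_eq_span_extensions_general {B W : Type*} [Fintype B] [Group W] [Fintype W]
    {M : CoxeterMatrix B} (cs : CoxeterSystem M W) (r : ℤ)
    (h₂ : r ≤ (Fintype.card B : ℤ)) :
    coxeterCode cs r =
      Submodule.span (ZMod 2)
        {f | ∃ w : W, (descentNumber cs w : ℤ) ≤ r ∧ f = coxeterExtension cs w} ∧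
    Module.finrank (ZMod 2) ↥(coxeterCode cs r) =
      ∑ i ∈ Finset.range (Fintype.card B + 1),
        if (i : ℤ) ≤ r then eulerianNumber cs i else 0 := by
  have hspan : coxeterCode cs r = Submodule.span (ZMod 2)
      {f | ∃ w : W, (descentNumber cs w : ℤ) ≤ r ∧ f = coxeterExtension cs w} := by
    refine le_antisymm (Submodule.span_le.mpr ?_) (Submodule.span_le.mpr ?_)
    · rintro _ ⟨x, J, hJ, rfl⟩
      obtain ⟨u, hxu, hu⟩ := cs.exists_not_isRightDescent_mem_leftCoset x J
      rw [(leftCoset_eq_iff _).mpr hxu]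
      exact indicator_leftCoset_mem_span_coxeterExtension cs hJ u hu
    · rintro _ ⟨w, hw, rfl⟩
      exact coxeterExtension_mem_coxeterCode cs h₂ hw
  have hrange : {f | ∃ w : W, (descentNumber cs w : ℤ) ≤ r ∧ f = coxeterExtension cs w} =
      Set.range fun w : {w : W // (descentNumber cs w : ℤ) ≤ r} ↦ coxeterExtension cs w := by
    ext f
    simp [eq_comm]
  refine ⟨hspan, ?_⟩
  rw [hspan, hrange]
  exact (finrank_span_eq_card ((linearIndependent_coxeterExtension cs).comp _
    Subtype.val_injective)).trans (card_descentNumber_le cs r)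

/-- the extensions `E_w` with `d(w) ≤ r` form a basis of `C_W(r)`;
in particular `C_W(r)` equals their span and `dim C_W(r) = ∑_{i=0}^r ⟨W,i⟩`. -/
theorem coxeterCode_eq_span_extensions {B W : Type*} [Fintype B] [Group W] [Fintype W]
    {M : CoxeterMatrix B} (cs : CoxeterSystem M W) (r : ℤ)
    (h₁ : -1 ≤ r) (h₂ : r ≤ (Fintype.card B : ℤ)) :
    coxeterCode cs r =
      Submodule.span (ZMod 2)
        {f | ∃ w : W, (descentNumber cs w : ℤ) ≤ r ∧ f = coxeterExtension cs w} ∧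
    Module.finrank (ZMod 2) ↥(coxeterCode cs r) =
      ∑ i ∈ Finset.range (Fintype.card B + 1),
        if (i : ℤ) ≤ r then eulerianNumber cs i else 0 :=
  coxeterCode_eq_span_extensions_general cs r h₂
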